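/- arXiv:1612.01681 — 15 statements merged into one kernel-verified Lean document; each statement's English description precedes it below -/
import Mathlib

section
/- If R is a p.q.-Baer *-ring (possibly not assumed unital a priori), then R has a unity element. -/
theorem IsIdempotentElem.mul_eq_self_of_forall_eq_mul {S : Type*} [Semigroup S] {e : S}
    (he : IsIdempotentElem e) (hrange : ∀ y : S, ∃ t : S, y = e * t) (y : S) : e * y = y := by
  obtain ⟨t, rfl⟩ := hrange y
  rw [← mul_assoc, he.eq]

theorem mul_eq_self_of_star_eq_of_forall_mul_eq_self {M : Type*} [Mul M] [StarMul M] {e : M}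
    (he : star e = e) (hleft : ∀ x : M, e * x = x) (x : M) : x * e = x := by
  simpa only [star_mul, star_star, he] using congrArg star (hleft (star x))

/-- If `R` is a p.q.-Baer *-ring (not assumed unital), then `R` has a unity element. -/
theorem pqBaer_has_unity (R : Type*) [NonUnitalRing R] [StarRing R]
    (hpq : ∀ a : R, ∃ e : R, (e * e = e ∧ star e = e) ∧
      ∀ y : R, (∀ r : R, a * r * y = 0) ↔ ∃ t : R, y = e * t) :
    ∃ u : R, ∀ x : R, u * x = x ∧ x * u = x := by
  obtain ⟨e, ⟨he, hstar⟩, hann⟩ := hpq 0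
  have hleft : ∀ x : R, e * x = x :=
    IsIdempotentElem.mul_eq_self_of_forall_eq_mul he
      fun y => (hann y).mp fun r => by rw [zero_mul, zero_mul]
  exact ⟨e, fun x => ⟨hleft x, mul_eq_self_of_star_eq_of_forall_mul_eq_self hstar hleft x⟩⟩
end

section
/- In a p.q.-Baer *-ring R, any projection k satisfying r_R(zR) = kR for some z ∈ R is central, i.e., kr = rk for all r ∈ R. -/
theorem IsIdempotentElem.mul_mul_self_eq_mul_self {R : Type*} [Semigroup R] {k : R}
    (hk : IsIdempotentElem k) (hideal : ∀ x, ∃ t, x * k = k * t) (x : R) :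
    k * x * k = x * k := by
  obtain ⟨t, ht⟩ := hideal x
  rw [mul_assoc, ht, ← mul_assoc, hk.eq]

theorem IsStarProjection.commute_of_mul_mul_self_eq {R : Type*} [Semigroup R] [StarMul R] {k : R}
    (hk : IsStarProjection k) (hsemi : ∀ x, k * x * k = x * k) (x : R) : Commute k x := by
  have hstar : k * x * k = k * x := by
    simpa only [star_mul, star_star, hk.isSelfAdjoint.star_eq, mul_assoc]
      using congrArg star (hsemi (star x))
  calc k * x = k * x * k := hstar.symm
    _ = x * k := hsemi x

theorem pqBaer_annihilator_projection_central_general (R : Type*) [Ring R] [StarRing R]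
    (k z : R) (hk : k * k = k ∧ star k = k)
    (hkz : ∀ y : R, (∀ r : R, z * r * y = 0) ↔ ∃ t : R, y = k * t) :
    ∀ r : R, k * r = r * k := by
  have hproj : IsStarProjection k := ⟨hk.1, hk.2⟩
  -- `r_R(zR) = kR` is a two-sided ideal, so it contains `x * k` for every `x`.
  have hideal : ∀ x, ∃ t, x * k = k * t := fun x =>
    (hkz (x * k)).mp fun r => by
      rw [← mul_assoc, mul_assoc z r x, (hkz k).mpr ⟨1, (mul_one k).symm⟩]
  exact hproj.commute_of_mul_mul_self_eq
    (hproj.isIdempotentElem.mul_mul_self_eq_mul_self hideal)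

/-- In a p.q.-Baer *-ring, any projection `k` with `r_R(zR) = kR` is central. -/
theorem pqBaer_annihilator_projection_central (R : Type*) [Ring R] [StarRing R]
    (hpq : ∀ a : R, ∃ e : R, (e * e = e ∧ star e = e) ∧
      ∀ y : R, (∀ r : R, a * r * y = 0) ↔ ∃ t : R, y = e * t)
    (k z : R) (hk : k * k = k ∧ star k = k)
    (hkz : ∀ y : R, (∀ r : R, z * r * y = 0) ↔ ∃ t : R, y = k * t) :
    ∀ r : R, k * r = r * k :=
  pqBaer_annihilator_projection_central_general R k z hk hkz
end

section
/- If R is a p.q.-Baer *-ring, then the involution of R is semi-proper, i.e., aRa* ≠ 0 for every nonzero a ∈ R. -/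
/-!
Let `e` be the projection with `r(aR) = eR`. Since `e ∈ eR`, `a * e = 0`; if `aRa* = 0` then
`a* ∈ eR`, so `a* = e a*`, and applying `*` gives `a = a e = 0`.
-/

theorem IsIdempotentElem.mul_eq_of_eq_mul {R : Type*} [Semigroup R] {e y t : R}
    (he : IsIdempotentElem e) (hy : y = e * t) : e * y = y := by
  rw [hy, ← mul_assoc, he.eq]

theorem IsStarProjection.eq_zero_of_mul_eq_zero_of_star_eq_mul {R : Type*} [SemigroupWithZero R]
    [StarMul R] {e a t : R} (he : IsStarProjection e) (hae : a * e = 0) (ha : star a = e * t) :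
    a = 0 :=
  calc a = star (star a) := (star_star a).symm
    _ = star (e * star a) := by rw [he.isIdempotentElem.mul_eq_of_eq_mul ha]
    _ = a * e := by rw [star_mul, star_star, he.isSelfAdjoint.star_eq]
    _ = 0 := hae

/-- If `R` is a p.q.-Baer *-ring, then the involution of `R` is semi-proper. -/
theorem pqBaer_semiproper (R : Type*) [Ring R] [StarRing R]
    (hpq : ∀ a : R, ∃ e : R, (e * e = e ∧ star e = e) ∧
      ∀ y : R, (∀ r : R, a * r * y = 0) ↔ ∃ t : R, y = e * t) :
    ∀ a : R, (∀ r : R, a * r * star a = 0) → a = 0 := by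
  intro a ha
  obtain ⟨e, ⟨he_idem, he_star⟩, hann⟩ := hpq a
  have hae : a * e = 0 := by simpa only [mul_one] using (hann e).mpr ⟨e, he_idem.symm⟩ 1
  obtain ⟨t, ht⟩ := (hann (star a)).mp ha
  exact IsStarProjection.eq_zero_of_mul_eq_zero_of_star_eq_mul ⟨he_idem, he_star⟩ hae ht
end

section
/- Let R be a p.q.-Baer *-ring and x ∈ R. Then x has a central cover e ∈ R, i.e., e is the smallest central projection with xe = x; moreover for all y ∈ R: xRy = 0 iff ey = 0. -/
/-!
Write the projection with `r_R(xR) = gR` as `g = 1 - e`, so that `r_R(xR) = {y | e * y = 0}`.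
Then `x * e = x` because `1 - e` annihilates `xR`. Since `r_R(xR)` is also a left ideal,
`e * s * e = e * s` for all `s`; applying `star` gives `s * e = e * s * e`, so `e` is central.
A central projection `f` with `x * f = x` makes `1 - f` annihilate `xR`, whence `e * f = e`.
-/

section

variable {R : Type*} [Ring R]

theorem IsIdempotentElem.exists_eq_mul_iff_one_sub_mul_eq_zero {g y : R}
    (hg : IsIdempotentElem g) : (∃ t, y = g * t) ↔ (1 - g) * y = 0 := by
  rw [sub_mul, one_mul, sub_eq_zero]
  constructor
  · rintro ⟨t, rfl⟩
    rw [← mul_assoc, hg.eq]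
  · intro hy
    exact ⟨y, hy⟩

theorem IsSelfAdjoint.commute_of_mul_mul_self [StarRing R] {e : R}
    (he : IsSelfAdjoint e) (h : ∀ s, e * s * e = e * s) (r : R) : Commute e r := by
  have hstar : e * r * e = r * e := by
    simpa [star_mul, he.star_eq, mul_assoc] using congrArg star (h (star r))
  exact (h r).symm.trans hstar

section RightAnnihilator

variable {x e : R} (hx : ∀ y, (∀ r, x * r * y = 0) ↔ e * y = 0)
include hx

theorem mul_mul_one_sub_eq_zero_of_rightAnnihilator (he : IsIdempotentElem e) (r : R) :
    x * r * (1 - e) = 0 :=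
  (hx (1 - e)).mpr (by rw [mul_sub, mul_one, he.eq, sub_self]) r

theorem mul_eq_self_of_rightAnnihilator (he : IsIdempotentElem e) : x * e = x := by
  have h := mul_mul_one_sub_eq_zero_of_rightAnnihilator hx he 1
  rwa [mul_one, mul_sub, mul_one, sub_eq_zero, eq_comm] at h

theorem mul_mul_self_of_rightAnnihilator (he : IsIdempotentElem e) (s : R) :
    e * s * e = e * s := by
  have h : e * (s * (1 - e)) = 0 := (hx _).mp fun r => by
    rw [← mul_assoc, mul_assoc x]
    exact mul_mul_one_sub_eq_zero_of_rightAnnihilator hx he (r * s)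
  rwa [← mul_assoc, mul_sub, mul_one, sub_eq_zero, eq_comm] at h

theorem mul_eq_self_of_rightAnnihilator_of_central {f : R} (hf : ∀ r, f * r = r * f)
    (hxf : x * f = x) : e * f = e := by
  have h : e * (1 - f) = 0 := (hx _).mp fun r => by
    rw [mul_sub, mul_one, mul_assoc, ← hf r, ← mul_assoc, hxf, sub_self]
  rwa [mul_sub, mul_one, sub_eq_zero, eq_comm] at h

end RightAnnihilator

end

/-- In a p.q.-Baer *-ring, every element `x` has a central cover `e` (the smallest
central projection with `x * e = x`), and `xRy = 0` iff `e * y = 0`. -/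
theorem pqBaer_central_cover (R : Type*) [Ring R] [StarRing R]
    (hpq : ∀ a : R, ∃ e : R, (e * e = e ∧ star e = e) ∧
      ∀ y : R, (∀ r : R, a * r * y = 0) ↔ ∃ t : R, y = e * t)
    (x : R) :
    ∃ e : R, (e * e = e ∧ star e = e) ∧ (∀ r : R, e * r = r * e) ∧ x * e = x ∧
      (∀ f : R, (f * f = f ∧ star f = f) → (∀ r : R, f * r = r * f) → x * f = x →
        e * f = e) ∧
      (∀ y : R, (∀ r : R, x * r * y = 0) ↔ e * y = 0) := by
  obtain ⟨g, hg, hann⟩ := hpq x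
  have hproj : IsStarProjection (1 - g) := IsStarProjection.one_sub ⟨hg.1, hg.2⟩
  have hx : ∀ y, (∀ r, x * r * y = 0) ↔ (1 - g) * y = 0 := fun y =>
    (hann y).trans (IsIdempotentElem.exists_eq_mul_iff_one_sub_mul_eq_zero hg.1)
  refine ⟨1 - g, ⟨hproj.isIdempotentElem.eq, hproj.isSelfAdjoint.star_eq⟩,
    hproj.isSelfAdjoint.commute_of_mul_mul_self
      (mul_mul_self_of_rightAnnihilator hx hproj.isIdempotentElem),
    mul_eq_self_of_rightAnnihilator hx hproj.isIdempotentElem,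
    fun f _ hf hxf => mul_eq_self_of_rightAnnihilator_of_central hx hf hxf, hx⟩
end

section
/- Let R be a p.q.-Baer *-ring, x ∈ R, and e = C(x) its central cover. Then r_R(xR) = r_R(eR) = l_R(Rx) = l_R(Re) = (1-e)R = R(1-e). -/
/-!
If `r(aR) = gR` for a projection `g`, then `r g ∈ r(aR)` for every `r`, so `g r g = r g`; applying
`star` gives `g r g = g r`, hence `g` is central. Then `1 - g` is a central projection fixing `a`,
so minimality of the central cover `e = C(a)` gives `e g = 0`, while `1 - e ∈ r(aR) = gR` gives
`g (1 - e) = 1 - e`; together `g = 1 - e`, i.e. `r(aR) = (1 - e)R = {y | e y = 0}`.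
Since `C(x*) = C(x)` and `C(e) = e`, every annihilator in the statement is `{y | e y = 0}`.
-/

lemma IsIdempotentElem.mul_eq_zero_iff_exists_eq_one_sub_mul {R : Type*} [Ring R] {e : R}
    (he : IsIdempotentElem e) (y : R) : e * y = 0 ↔ ∃ t : R, y = (1 - e) * t := by
  constructor
  · intro h
    exact ⟨y, by rw [sub_mul, one_mul, h, sub_zero]⟩
  · rintro ⟨t, rfl⟩
    rw [← mul_assoc, he.mul_one_sub_self, zero_mul]

section

variable {R : Type*} [Ring R] [StarRing R]

variable (R) in
def IsPQBaer : Prop :=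
  ∀ a : R, ∃ g : R, IsStarProjection g ∧
    ∀ y : R, (∀ r : R, a * r * y = 0) ↔ ∃ t : R, y = g * t

structure IsCentralCover (x e : R) : Prop where
  isStarProjection : IsStarProjection e
  mem_center : e ∈ Subring.center R
  mul_eq_left : x * e = x
  minimal : ∀ f : R, IsStarProjection f → f ∈ Subring.center R → x * f = x → e * f = e

lemma IsSelfAdjoint.mem_center_of_forall_mul_mul_self {p : R} (hp : IsSelfAdjoint p)
    (h : ∀ r : R, p * (r * p) = r * p) : p ∈ Subring.center R := by
  rw [Subring.mem_center_iff]
  intro r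
  have hpr : p * r * p = p * r := by
    simpa [star_mul, hp.star_eq, mul_assoc] using congrArg star (h (star r))
  rw [← hpr, mul_assoc, h]

lemma IsStarProjection.mem_center_of_rightAnnihilator_eq {a g : R} (hg : IsStarProjection g)
    (hgr : ∀ y : R, (∀ r : R, a * r * y = 0) ↔ ∃ t : R, y = g * t) :
    g ∈ Subring.center R := by
  have hag : ∀ r : R, a * r * g = 0 := (hgr g).2 ⟨g, hg.isIdempotentElem.symm⟩
  refine hg.isSelfAdjoint.mem_center_of_forall_mul_mul_self fun r => ?_
  obtain ⟨t, ht⟩ := (hgr (r * g)).1 fun s => by rw [← mul_assoc, mul_assoc a, hag]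
  rw [ht, ← mul_assoc, hg.isIdempotentElem.eq]

lemma star_mul_eq_self_iff_of_mem_center (x : R) {f : R} (hf : IsSelfAdjoint f)
    (hfc : f ∈ Subring.center R) : star x * f = star x ↔ x * f = x := by
  rw [← star_inj, star_mul, star_star, hf.star_eq, Subring.mem_center_iff.1 hfc]

lemma forall_mul_mul_eq_zero_iff_star (x y : R) :
    (∀ r : R, y * r * x = 0) ↔ ∀ r : R, star x * r * star y = 0 := by
  rw [star_involutive.surjective.forall]
  refine forall_congr' fun r => ?_
  rw [← star_eq_zero, star_mul, star_mul, star_star, mul_assoc]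

namespace IsCentralCover

variable {x e : R}

lemma self (he : IsStarProjection e) (hc : e ∈ Subring.center R) : IsCentralCover e e :=
  ⟨he, hc, he.isIdempotentElem.eq, fun _ _ _ hf => hf⟩

protected lemma star (h : IsCentralCover x e) : IsCentralCover (star x) e where
  isStarProjection := h.isStarProjection
  mem_center := h.mem_center
  mul_eq_left := (star_mul_eq_self_iff_of_mem_center x
    h.isStarProjection.isSelfAdjoint h.mem_center).2 h.mul_eq_left
  minimal f hf hfc hxf :=
    h.minimal f hf hfc ((star_mul_eq_self_iff_of_mem_center x hf.isSelfAdjoint hfc).1 hxf)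

lemma eq_one_sub_of_rightAnnihilator_eq (h : IsCentralCover x e) {g : R}
    (hg : IsStarProjection g)
    (hgr : ∀ y : R, (∀ r : R, x * r * y = 0) ↔ ∃ t : R, y = g * t) :
    g = 1 - e := by
  have hgc := hg.mem_center_of_rightAnnihilator_eq hgr
  have hxg : x * g = 0 := by simpa using (hgr g).2 ⟨g, hg.isIdempotentElem.symm⟩ 1
  have heg : e * g = 0 := by
    have := h.minimal (1 - g) hg.one_sub (sub_mem (one_mem _) hgc)
      (by rw [mul_sub, hxg, mul_one, sub_zero])
    rwa [mul_sub, mul_one, sub_eq_self] at this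
  have hge : g * (1 - e) = 1 - e := by
    obtain ⟨t, ht⟩ := (hgr (1 - e)).1 fun r => by
      rw [mul_sub, mul_one, mul_assoc, Subring.mem_center_iff.1 h.mem_center, ← mul_assoc,
        h.mul_eq_left, sub_self]
    rw [ht, ← mul_assoc, hg.isIdempotentElem.eq]
  calc g = g * (1 - e) + e * g := by rw [Subring.mem_center_iff.1 hgc e]; noncomm_ring
    _ = 1 - e := by rw [hge, heg, add_zero]

lemma forall_mul_mul_eq_zero_iff_right (hpq : IsPQBaer R) (h : IsCentralCover x e) (y : R) :
    (∀ r : R, x * r * y = 0) ↔ e * y = 0 := by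
  obtain ⟨g, hg, hgr⟩ := hpq x
  rw [hgr y, h.eq_one_sub_of_rightAnnihilator_eq hg hgr,
    h.isStarProjection.isIdempotentElem.mul_eq_zero_iff_exists_eq_one_sub_mul]

lemma forall_mul_mul_eq_zero_iff_left (hpq : IsPQBaer R) (h : IsCentralCover x e) (y : R) :
    (∀ r : R, y * r * x = 0) ↔ e * y = 0 := by
  rw [forall_mul_mul_eq_zero_iff_star, h.star.forall_mul_mul_eq_zero_iff_right hpq,
    ← star_eq_zero, star_mul, star_star, h.isStarProjection.isSelfAdjoint.star_eq,
    Subring.mem_center_iff.1 h.mem_center]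

end IsCentralCover

end

/-- Let `R` be a p.q.-Baer *-ring, `x ∈ R`, and `e = C(x)` its central cover.  Then
`r_R(xR) = r_R(eR) = l_R(Rx) = l_R(Re) = (1-e)R = R(1-e)`. -/
theorem pqBaer_annihilators_eq (R : Type*) [Ring R] [StarRing R]
    (hpq : ∀ a : R, ∃ e : R, (e * e = e ∧ star e = e) ∧
      ∀ y : R, (∀ r : R, a * r * y = 0) ↔ ∃ t : R, y = e * t)
    (x e : R)
    (he : (e * e = e ∧ star e = e) ∧ (∀ r : R, e * r = r * e) ∧ x * e = x ∧
      ∀ f : R, (f * f = f ∧ star f = f) → (∀ r : R, f * r = r * f) → x * f = x →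
        e * f = e) :
    ∀ y : R,
      ((∀ r : R, x * r * y = 0) ↔ (∀ r : R, e * r * y = 0)) ∧
      ((∀ r : R, x * r * y = 0) ↔ (∀ r : R, y * r * x = 0)) ∧
      ((∀ r : R, x * r * y = 0) ↔ (∀ r : R, y * r * e = 0)) ∧
      ((∀ r : R, x * r * y = 0) ↔ ∃ t : R, y = (1 - e) * t) ∧
      ((∀ r : R, x * r * y = 0) ↔ ∃ t : R, y = t * (1 - e)) := by
  obtain ⟨hproj, hcomm, hxe, hmin⟩ := he
  have hpq' : IsPQBaer R := fun a =>
    (hpq a).imp fun _ hg => ⟨isStarProjection_iff'.2 hg.1, hg.2⟩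
  have hc : e ∈ Subring.center R := Subring.mem_center_iff.2 fun r => (hcomm r).symm
  have hx : IsCentralCover x e := ⟨isStarProjection_iff'.2 hproj, hc, hxe,
    fun f hf hfc => hmin f (isStarProjection_iff'.1 hf)
      fun r => (Subring.mem_center_iff.1 hfc r).symm⟩
  have hee : IsCentralCover e e := .self hx.isStarProjection hc
  have hc_one_sub : ∀ t : R, t * (1 - e) = (1 - e) * t :=
    Subring.mem_center_iff.1 (sub_mem (one_mem _) hc)
  intro y
  simp only [hx.forall_mul_mul_eq_zero_iff_right hpq', hx.forall_mul_mul_eq_zero_iff_left hpq',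
    hee.forall_mul_mul_eq_zero_iff_right hpq', hee.forall_mul_mul_eq_zero_iff_left hpq', hc_one_sub,
    ← hx.isStarProjection.isIdempotentElem.mul_eq_zero_iff_exists_eq_one_sub_mul, and_self]
end

section
/- In a p.q.-Baer *-ring R, C(x) = C(x*) for every x ∈ R. -/
/-! Applying `star` shows that a central projection `g` satisfies `x g = x` iff `x* g = x*`, so
`x` and `x*` lie under the same central projections and hence have the same smallest one. -/

theorem mul_eq_self_iff_star_mul_eq_star {R : Type*} [Mul R] [StarMul R] {x g : R}
    (hg : star g = g) (hgc : ∀ r : R, g * r = r * g) : x * g = x ↔ star x * g = star x := by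
  have hstar : star (x * g) = star x * g := by rw [star_mul, hg, hgc]
  rw [← hstar, star_inj]

theorem pqBaer_central_cover_star_general (R : Type*) [Ring R] [StarRing R]
    (x e f : R)
    (he : (e * e = e ∧ star e = e) ∧ (∀ r : R, e * r = r * e) ∧ x * e = x ∧
      ∀ g : R, (g * g = g ∧ star g = g) → (∀ r : R, g * r = r * g) → x * g = x →
        e * g = e)
    (hf : (f * f = f ∧ star f = f) ∧ (∀ r : R, f * r = r * f) ∧ star x * f = star x ∧
      ∀ g : R, (g * g = g ∧ star g = g) → (∀ r : R, g * r = r * g) →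
        star x * g = star x → f * g = f) :
    e = f := by
  obtain ⟨he_proj, he_central, hxe, he_min⟩ := he
  obtain ⟨hf_proj, hf_central, hxf, hf_min⟩ := hf
  have hef : e * f = e :=
    he_min f hf_proj hf_central ((mul_eq_self_iff_star_mul_eq_star hf_proj.2 hf_central).2 hxf)
  have hfe : f * e = f :=
    hf_min e he_proj he_central ((mul_eq_self_iff_star_mul_eq_star he_proj.2 he_central).1 hxe)
  rw [← hef, ← hf_central e, hfe]

/-- In a p.q.-Baer *-ring, `C(x) = C(x*)`. -/
theorem pqBaer_central_cover_star (R : Type*) [Ring R] [StarRing R]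
    (hpq : ∀ a : R, ∃ e : R, (e * e = e ∧ star e = e) ∧
      ∀ y : R, (∀ r : R, a * r * y = 0) ↔ ∃ t : R, y = e * t)
    (x e f : R)
    (he : (e * e = e ∧ star e = e) ∧ (∀ r : R, e * r = r * e) ∧ x * e = x ∧
      ∀ g : R, (g * g = g ∧ star g = g) → (∀ r : R, g * r = r * g) → x * g = x →
        e * g = e)
    (hf : (f * f = f ∧ star f = f) ∧ (∀ r : R, f * r = r * f) ∧ star x * f = star x ∧
      ∀ g : R, (g * g = g ∧ star g = g) → (∀ r : R, g * r = r * g) →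
        star x * g = star x → f * g = f) :
    e = f :=
  pqBaer_central_cover_star_general R x e f he hf
end

section
/- In a p.q.-Baer *-ring R, for x, y ∈ R: xRy = 0 if and only if C(x)C(y) = 0. -/
/-!
If `p` is the projection with `p R` equal to the right annihilator of `x R`, then `p` is
left semicentral (the annihilator is a right ideal) and self-adjoint, hence central. So `1 - p`
is a central projection fixing `x`, which gives `C(x) p = 0`; and `x R y = 0` puts `y` in `p R`,
which gives `C(y) ≤ p`. Conversely `C(x) C(y) = 0` kills `x r y = x C(x) r C(y) y`.
-/

section

variable {R : Type*}

def GeneratesRightAnnihilator [Mul R] [Zero R] (x p : R) : Prop :=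
  ∀ y : R, (∀ r : R, x * r * y = 0) ↔ ∃ t : R, y = p * t

def IsCentralCover_s6 [Mul R] [Star R] (x e : R) : Prop :=
  (e * e = e ∧ star e = e) ∧ (∀ r : R, e * r = r * e) ∧ x * e = x ∧
    ∀ g : R, (g * g = g ∧ star g = g) → (∀ r : R, g * r = r * g) → x * g = x → e * g = e

theorem IsSelfAdjoint.commute_of_mul_eq_mul_mul [Semigroup R] [StarMul R] {p : R}
    (hp : IsSelfAdjoint p) (h : ∀ s : R, s * p = p * s * p) (s : R) : Commute p s := by
  have h' := congrArg star (h (star s))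
  simp only [star_mul, hp.star_eq, star_star, ← mul_assoc] at h'
  rw [Commute, SemiconjBy, h', ← h]

namespace GeneratesRightAnnihilator

section SemigroupWithZero

variable [SemigroupWithZero R] {x p : R}

theorem mul_eq_self (hP : GeneratesRightAnnihilator x p) (hp : IsIdempotentElem p) {y : R}
    (hy : ∀ r : R, x * r * y = 0) : p * y = y := by
  obtain ⟨t, rfl⟩ := (hP y).mp hy
  rw [← mul_assoc, hp.eq]

theorem mul_mul_eq_zero (hP : GeneratesRightAnnihilator x p) (hp : IsIdempotentElem p)
    (r : R) : x * r * p = 0 :=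
  (hP p).mpr ⟨p, hp.eq.symm⟩ r

theorem mul_eq_mul_mul (hP : GeneratesRightAnnihilator x p) (hp : IsIdempotentElem p)
    (s : R) : s * p = p * s * p := by
  refine (hP.mul_eq_self hp fun r => ?_).symm.trans (mul_assoc p s p).symm
  rw [← mul_assoc, mul_assoc x r s]
  exact hP.mul_mul_eq_zero hp (r * s)

theorem commute [StarMul R] (hP : GeneratesRightAnnihilator x p) (hp : IsIdempotentElem p)
    (hp' : IsSelfAdjoint p) (s : R) : Commute p s :=
  hp'.commute_of_mul_eq_mul_mul (hP.mul_eq_mul_mul hp) s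

end SemigroupWithZero

theorem mul_eq_zero [MonoidWithZero R] {x p : R} (hP : GeneratesRightAnnihilator x p)
    (hp : IsIdempotentElem p) : x * p = 0 := by
  simpa using hP.mul_mul_eq_zero hp 1

end GeneratesRightAnnihilator

theorem IsCentralCover_s6.mul_eq_zero [Ring R] [StarRing R] {x e p : R} (he : IsCentralCover_s6 x e)
    (hp : IsIdempotentElem p) (hp' : IsSelfAdjoint p) (hpc : ∀ r : R, Commute p r)
    (hxp : x * p = 0) : e * p = 0 := by
  have h : e * (1 - p) = e :=
    he.2.2.2 (1 - p) ⟨hp.one_sub, (IsSelfAdjoint.one R).sub hp'⟩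
      (fun r => (Commute.one_left r).sub_left (hpc r)) (by rw [mul_sub, mul_one, hxp, sub_zero])
  rwa [mul_sub, mul_one, sub_eq_self] at h

theorem mul_mul_eq_zero_of_commute [SemigroupWithZero R] {x y e f : R}
    (he : ∀ r : R, Commute e r) (hxe : x * e = x) (hyf : y * f = y) (hef : e * f = 0)
    (r : R) : x * r * y = 0 := by
  calc x * r * y = x * e * r * (y * f) := by rw [hxe, hyf]
    _ = x * r * (y * (e * f)) := by
      rw [mul_assoc x e, (he r).eq, ← mul_assoc x r, mul_assoc (x * r) e, ← mul_assoc e,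
        (he y).eq, mul_assoc y]
    _ = 0 := by rw [hef, mul_zero, mul_zero]

end

/-- In a p.q.-Baer *-ring, `xRy = 0` iff `C(x) * C(y) = 0`. -/
theorem pqBaer_xRy_iff_covers (R : Type*) [Ring R] [StarRing R]
    (hpq : ∀ a : R, ∃ e : R, (e * e = e ∧ star e = e) ∧
      ∀ y : R, (∀ r : R, a * r * y = 0) ↔ ∃ t : R, y = e * t)
    (x y e f : R)
    (he : (e * e = e ∧ star e = e) ∧ (∀ r : R, e * r = r * e) ∧ x * e = x ∧
      ∀ g : R, (g * g = g ∧ star g = g) → (∀ r : R, g * r = r * g) → x * g = x →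
        e * g = e)
    (hf : (f * f = f ∧ star f = f) ∧ (∀ r : R, f * r = r * f) ∧ y * f = y ∧
      ∀ g : R, (g * g = g ∧ star g = g) → (∀ r : R, g * r = r * g) → y * g = y →
        f * g = f) :
    (∀ r : R, x * r * y = 0) ↔ e * f = 0 := by
  obtain ⟨p, ⟨hpp, hsp⟩, hP⟩ := hpq x
  replace hP : GeneratesRightAnnihilator x p := hP
  have hpc : ∀ r : R, Commute p r := hP.commute hpp hsp
  constructor
  · intro hxy
    have hep : e * p = 0 :=
      IsCentralCover_s6.mul_eq_zero he hpp hsp hpc (hP.mul_eq_zero hpp)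
    have hyp : y * p = y := (hpc y).eq.symm.trans (hP.mul_eq_self hpp hxy)
    have hfp : f * p = f := hf.2.2.2 p ⟨hpp, hsp⟩ hpc hyp
    calc e * f = e * p * f := by rw [mul_assoc, (hpc f).eq, hfp]
      _ = 0 := by rw [hep, zero_mul]
  · exact mul_mul_eq_zero_of_commute he.2.1 he.2.2.1 hf.2.2.1
end

section
/- Let R be a p.q.-Baer *-ring whose only central projections are 0 and 1. Then for x, y ∈ R: xRy = 0 if and only if x = 0 or y = 0. -/
/-! The right annihilator of `xR` is `eR` for a projection `e`. Since `eR` is a right ideal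
containing `Re` (as `xRe = 0`), `e` is left semicentral, and a self-adjoint left semicentral
idempotent is central. Hence `e = 0`, forcing `y = 0`, or `e = 1`, forcing `x = 0`. -/

theorem mul_mul_eq_mul_of_rightAnnihilator_eq {R : Type*} [Ring R] {x e : R}
    (he : IsIdempotentElem e) (hann : ∀ y : R, (∀ r : R, x * r * y = 0) ↔ ∃ t : R, y = e * t)
    (r : R) : e * r * e = r * e := by
  have hxe : ∀ s : R, x * s * e = 0 := (hann e).mpr ⟨1, (mul_one e).symm⟩
  obtain ⟨t, ht⟩ := (hann (r * e)).mp fun s => by simpa [mul_assoc] using hxe (s * r)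
  rw [mul_assoc, ht, ← mul_assoc, he.eq, ← ht]

theorem IsSelfAdjoint.commute_of_mul_mul_eq_mul {R : Type*} [Semigroup R] [StarMul R] {e : R}
    (he : IsSelfAdjoint e) (hsemi : ∀ r : R, e * r * e = r * e) (r : R) : e * r = r * e := by
  have hstar : e * r * e = e * r := by
    simpa [star_mul, he.star_eq, mul_assoc] using congrArg star (hsemi (star r))
  rw [← hstar, hsemi]

/-- In a p.q.-Baer *-ring whose only central projections are `0` and `1`,
`xRy = 0` iff `x = 0` or `y = 0`. -/
theorem pqBaer_trivial_central_projections (R : Type*) [Ring R] [StarRing R]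
    (hpq : ∀ a : R, ∃ e : R, (e * e = e ∧ star e = e) ∧
      ∀ y : R, (∀ r : R, a * r * y = 0) ↔ ∃ t : R, y = e * t)
    (hcen : ∀ e : R, (e * e = e ∧ star e = e) → (∀ r : R, e * r = r * e) →
      e = 0 ∨ e = 1) :
    ∀ x y : R, (∀ r : R, x * r * y = 0) ↔ (x = 0 ∨ y = 0) := by
  intro x y
  refine ⟨fun hxy => ?_, by rintro (rfl | rfl) r <;> simp⟩
  obtain ⟨e, ⟨he_idem, he_sa⟩, hann⟩ := hpq x
  have he_central : ∀ r : R, e * r = r * e :=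
    IsSelfAdjoint.commute_of_mul_mul_eq_mul he_sa
      (mul_mul_eq_mul_of_rightAnnihilator_eq he_idem hann)
  rcases hcen e ⟨he_idem, he_sa⟩ he_central with rfl | rfl
  · obtain ⟨t, rfl⟩ := (hann y).mp hxy
    exact Or.inr (zero_mul t)
  · simpa using Or.inl ((hann 1).mpr ⟨1, (one_mul 1).symm⟩ 1)
end

section
/- Let R be a p.q.-Baer *-ring such that C(xy) = C(x)C(y) for all x, y ∈ R. Then R satisfies the *-Insertion of Factors Property: ab = 0 implies aRb* = 0 for all a, b ∈ R. -/
/-! Since `C` is multiplicative, `C(a) C(b) = C(ab) = C(0) = 0`. As `C(a)` is central,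
`a r b* = a C(a) r C(b) b* = a r C(a) C(b) b* = 0`. -/

section

variable {R : Type*}

theorem mul_star_eq_star_of_mul_eq [Mul R] [StarMul R] {x e : R} (he : star e = e)
    (h : x * e = x) : e * star x = star x := by
  simpa only [star_mul, he] using congrArg star h

theorem mul_mul_eq_zero_of_orthogonal [Ring R] {a e f y : R} (r : R) (ha : a * e = a)
    (hy : f * y = y) (he : e * r = r * e) (hef : e * f = 0) : a * r * y = 0 :=
  calc a * r * y = a * e * r * (f * y) := by rw [ha, hy]
    _ = a * r * (e * f) * y := by rw [mul_assoc a e r, he]; noncomm_ring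
    _ = 0 := by rw [hef]; simp

end

theorem pqBaer_multiplicative_cover_starIFP_general (R : Type*) [Ring R] [StarRing R]
    (C : R → R)
    (hC : ∀ x : R, (C x * C x = C x ∧ star (C x) = C x) ∧
      (∀ r : R, C x * r = r * C x) ∧ x * C x = x ∧
      ∀ g : R, (g * g = g ∧ star g = g) → (∀ r : R, g * r = r * g) → x * g = x →
        C x * g = C x)
    (hmul : ∀ x y : R, C (x * y) = C x * C y) :
    ∀ a b : R, a * b = 0 → ∀ r : R, a * r * star b = 0 := by
  intro a b hab r
  obtain ⟨-, hcomm_a, ha, -⟩ := hC a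
  obtain ⟨⟨-, hstar_b⟩, -, hb, -⟩ := hC b
  -- minimality of `C 0`, tested against the central projection `0`
  have hC_zero : C 0 = 0 := by
    simpa using ((hC 0).2.2.2 0 (by simp) (by simp) (by simp)).symm
  have horth : C a * C b = 0 := by rw [← hmul, hab, hC_zero]
  exact mul_mul_eq_zero_of_orthogonal r ha (mul_star_eq_star_of_mul_eq hstar_b hb)
    (hcomm_a r) horth

/-- If `R` is a p.q.-Baer *-ring with `C(xy) = C(x)C(y)` for all `x, y`, then `R`
satisfies the `*`-Insertion of Factors Property. -/
theorem pqBaer_multiplicative_cover_starIFP (R : Type*) [Ring R] [StarRing R]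
    (hpq : ∀ a : R, ∃ e : R, (e * e = e ∧ star e = e) ∧
      ∀ y : R, (∀ r : R, a * r * y = 0) ↔ ∃ t : R, y = e * t)
    (C : R → R)
    (hC : ∀ x : R, (C x * C x = C x ∧ star (C x) = C x) ∧
      (∀ r : R, C x * r = r * C x) ∧ x * C x = x ∧
      ∀ g : R, (g * g = g ∧ star g = g) → (∀ r : R, g * r = r * g) → x * g = x →
        C x * g = C x)
    (hmul : ∀ x y : R, C (x * y) = C x * C y) :
    ∀ a b : R, a * b = 0 → ∀ r : R, a * r * star b = 0 :=
  pqBaer_multiplicative_cover_starIFP_general R C hC hmul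
end

section
/- Let R be a p.q.-Baer *-ring and (e_i) a family of projections in R having a supremum e in the projection poset. Then for x ∈ R: xRe = 0 if and only if xRe_i = 0 for all i. -/
/-! The right annihilator of `xR` is `pR` for a projection `p`. A projection `f` lies in `pR`
exactly when `f ≤ p`, so `xRf = 0` says `f ≤ p`, and a supremum of projections below `p`
is again below `p`. -/

theorem forall_mul_mul_eq_zero_of_eq_mul {R : Type*} [Semigroup R] [Zero R] {x e f : R}
    (h : ∀ r, x * r * e = 0) (hf : f = f * e) (r : R) : x * r * f = 0 := by
  rw [hf, ← mul_assoc, mul_assoc x r f, h]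

theorem IsSelfAdjoint.eq_mul_of_mul_eq {R : Type*} [Mul R] [StarMul R] {p f : R}
    (hp : IsSelfAdjoint p) (hf : IsSelfAdjoint f) (h : p * f = f) : f = f * p := by
  have := congrArg star h
  rwa [star_mul, hp.star_eq, hf.star_eq, eq_comm] at this

theorem mul_eq_self_of_exists_eq_mul {R : Type*} [Semigroup R] {p y : R} (hp : p * p = p)
    (hy : ∃ t, y = p * t) : p * y = y := by
  obtain ⟨t, rfl⟩ := hy
  rw [← mul_assoc, hp]

theorem pqBaer_sup_annihilation_general (R : Type*) [Ring R] [StarRing R]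
    (hpq : ∀ a : R, ∃ e : R, (e * e = e ∧ star e = e) ∧
      ∀ y : R, (∀ r : R, a * r * y = 0) ↔ ∃ t : R, y = e * t)
    {ι : Type*} (E : ι → R) (hE : ∀ i, E i * E i = E i ∧ star (E i) = E i)
    (e : R)
    (hub : ∀ i, E i = E i * e)
    (hlub : ∀ f : R, (f * f = f ∧ star f = f) → (∀ i, E i = E i * f) → e = e * f)
    (x : R) :
    (∀ r : R, x * r * e = 0) ↔ ∀ i, ∀ r : R, x * r * E i = 0 := by
  refine ⟨fun h i => forall_mul_mul_eq_zero_of_eq_mul h (hub i), fun h => ?_⟩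
  obtain ⟨p, hproj, hann⟩ := hpq x
  have hE_le : ∀ i, E i = E i * p := fun i =>
    IsSelfAdjoint.eq_mul_of_mul_eq hproj.2 (hE i).2
      (mul_eq_self_of_exists_eq_mul hproj.1 ((hann (E i)).mp (h i)))
  have hxp : ∀ r, x * r * p = 0 := (hann p).mpr ⟨p, hproj.1.symm⟩
  exact forall_mul_mul_eq_zero_of_eq_mul hxp (hlub p hproj hE_le)

/-- In a p.q.-Baer *-ring, if `e` is a supremum (in the projection poset) of a family
of projections `e_i`, then `xRe = 0` iff `xRe_i = 0` for all `i`. -/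
theorem pqBaer_sup_annihilation (R : Type*) [Ring R] [StarRing R]
    (hpq : ∀ a : R, ∃ e : R, (e * e = e ∧ star e = e) ∧
      ∀ y : R, (∀ r : R, a * r * y = 0) ↔ ∃ t : R, y = e * t)
    {ι : Type*} (E : ι → R) (hE : ∀ i, E i * E i = E i ∧ star (E i) = E i)
    (e : R) (he : e * e = e ∧ star e = e)
    (hub : ∀ i, E i = E i * e)
    (hlub : ∀ f : R, (f * f = f ∧ star f = f) → (∀ i, E i = E i * f) → e = e * f)
    (x : R) :
    (∀ r : R, x * r * e = 0) ↔ ∀ i, ∀ r : R, x * r * E i = 0 :=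
  pqBaer_sup_annihilation_general R hpq E hE e hub hlub x
end

section
/- Let R be a p.q.-Baer *-ring and B a *-subring of R with B = B'' (the double commutant of B in R). If (e_i) is a family of central projections in B that has a supremum e ∈ R among projections, then e ∈ B. -/
/-!
Let `e` be the supremum of the central projections `E i`. For any `y`, the element
`a = y e - e y e` kills every `E i` on the right, hence so does `a R`, so every `E i` lies
below the projection `g` generating the right annihilator of `a R`. Then `e ≤ g`, which gives
`a = a e = a e g = a g = 0`. Thus `y e = e y e` for all `y`; applied to `y*` this also gives
`e y = e y e`, so `e` is central and in particular lies in `B'' = B`.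
-/

section SupCentralProjections

variable {R : Type*} [Ring R] [StarRing R] {ι : Type*} {E : ι → R} {e : R}

theorem eq_zero_of_mul_central_projections_eq_zero {a g : R} (hg : IsStarProjection g)
    (hann : ∀ y : R, (∀ r : R, a * r * y = 0) ↔ ∃ t : R, y = g * t)
    (hEcen : ∀ i, ∀ r : R, E i * r = r * E i)
    (hlub : ∀ f : R, IsStarProjection f → (∀ i, E i = E i * f) → e = e * f)
    (haE : ∀ i, a * E i = 0) (hae : a = a * e) : a = 0 := by
  have hEg : ∀ i, E i = E i * g := by
    intro i
    have hEann : ∀ r : R, a * r * E i = 0 := fun r => by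
      rw [mul_assoc, ← hEcen i r, ← mul_assoc, haE i, zero_mul]
    obtain ⟨t, ht⟩ := (hann (E i)).mp hEann
    rw [hEcen i g, ht, ← mul_assoc, hg.isIdempotentElem.eq]
  have hag : a * g = 0 := by
    simpa using (hann g).mpr ⟨g, hg.isIdempotentElem.eq.symm⟩ 1
  calc a = a * e * g := by rw [mul_assoc, ← hlub g hg hEg, ← hae]
    _ = 0 := by rw [← hae, hag]

theorem mul_eq_mul_mul_of_isLUB_central_projections
    (hpq : ∀ a : R, ∃ g : R, IsStarProjection g ∧
      ∀ y : R, (∀ r : R, a * r * y = 0) ↔ ∃ t : R, y = g * t)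
    (hEcen : ∀ i, ∀ r : R, E i * r = r * E i) (he : IsIdempotentElem e)
    (hub : ∀ i, E i = E i * e)
    (hlub : ∀ f : R, IsStarProjection f → (∀ i, E i = E i * f) → e = e * f) (y : R) :
    y * e = e * y * e := by
  obtain ⟨g, hg, hann⟩ := hpq (y * e - e * y * e)
  have heE : ∀ i, e * E i = E i := fun i => by rw [← hEcen i e, ← hub i]
  refine sub_eq_zero.mp (eq_zero_of_mul_central_projections_eq_zero hg hann hEcen hlub
    (fun i => ?_) ?_)
  · rw [sub_mul, mul_assoc, heE, mul_assoc, mul_assoc, heE, ← hEcen i y, ← mul_assoc, heE,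
      sub_self]
  · rw [sub_mul, mul_assoc y, he.eq, mul_assoc (e * y), he.eq]

theorem commute_of_forall_mul_eq_mul_mul (he : IsSelfAdjoint e)
    (h : ∀ y : R, y * e = e * y * e) (y : R) : e * y = y * e := by
  have hstar : e * y = e * y * e := by
    simpa [star_mul, he.star_eq, mul_assoc] using congrArg star (h (star y))
  rw [h y, ← hstar]

end SupCentralProjections

theorem pqBaer_double_commutant_sup_mem_general (R : Type*) [Ring R] [StarRing R]
    (hpq : ∀ a : R, ∃ e : R, (e * e = e ∧ star e = e) ∧
      ∀ y : R, (∀ r : R, a * r * y = 0) ↔ ∃ t : R, y = e * t)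
    (B : NonUnitalSubring R)
    (hBdc : ∀ x : R, x ∈ B ↔
      ∀ y : R, (∀ b ∈ B, y * b = b * y) → x * y = y * x)
    {ι : Type*} (E : ι → R)
    (hEcen : ∀ i, ∀ r : R, E i * r = r * E i)
    (e : R) (he : e * e = e ∧ star e = e)
    (hub : ∀ i, E i = E i * e)
    (hlub : ∀ f : R, (f * f = f ∧ star f = f) → (∀ i, E i = E i * f) → e = e * f) :
    e ∈ B := by
  have hcorner := mul_eq_mul_mul_of_isLUB_central_projections
    (fun a => (hpq a).imp fun _ hg => ⟨⟨hg.1.1, hg.1.2⟩, hg.2⟩) hEcen he.1 hub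
    fun f hf => hlub f ⟨hf.isIdempotentElem, hf.isSelfAdjoint⟩
  exact (hBdc e).mpr fun y _ => commute_of_forall_mul_eq_mul_mul he.2 hcorner y

/-- Let `R` be a p.q.-Baer *-ring and `B` a *-subring with `B = B''`.  If a family of
central projections in `B` has a supremum `e` in `R` among projections, then `e ∈ B`. -/
theorem pqBaer_double_commutant_sup_mem (R : Type*) [Ring R] [StarRing R]
    (hpq : ∀ a : R, ∃ e : R, (e * e = e ∧ star e = e) ∧
      ∀ y : R, (∀ r : R, a * r * y = 0) ↔ ∃ t : R, y = e * t)
    (B : NonUnitalSubring R) (hBstar : ∀ b ∈ B, star b ∈ B)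
    (hBdc : ∀ x : R, x ∈ B ↔
      ∀ y : R, (∀ b ∈ B, y * b = b * y) → x * y = y * x)
    {ι : Type*} (E : ι → R)
    (hEB : ∀ i, E i ∈ B)
    (hE : ∀ i, E i * E i = E i ∧ star (E i) = E i)
    (hEcen : ∀ i, ∀ r : R, E i * r = r * E i)
    (e : R) (he : e * e = e ∧ star e = e)
    (hub : ∀ i, E i = E i * e)
    (hlub : ∀ f : R, (f * f = f ∧ star f = f) → (∀ i, E i = E i * f) → e = e * f) :
    e ∈ B :=
  pqBaer_double_commutant_sup_mem_general R hpq B hBdc E hEcen e he hub hlub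
end

section
/- A *-ring R is a p.q.-Baer *-ring if and only if (a) R has a unity element, and (b) for each x ∈ R there exists a central projection e ∈ R such that r_R(xR) = r_R(eR). -/
/-!
If `r(xR) = eR` for a projection `e`, then `xRe = 0`, so every `re` lies in `r(xR) = eR`,
whence `ere = re`; applying `star` gives `ere = er`, so `e` is central. Taking `x = 0`
gives `r(0) = R = eR`, so `e` is a left unity and, being self-adjoint, a unity `u`. Finally,
for a central projection `f` one has `r(fR) = (u - f)R`, so the two conditions are exchanged
by passing from a central projection to its complement `u - f`.
-/

section Unity

variable {R : Type*} [NonUnitalRing R] {u : R} (hu : ∀ x : R, u * x = x ∧ x * u = x)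
include hu

lemma isIdempotentElem_unity_sub {e : R} (he : IsIdempotentElem e) :
    IsIdempotentElem (u - e) := by
  unfold IsIdempotentElem at he ⊢
  rw [mul_sub, sub_mul, sub_mul, (hu u).1, (hu e).1, (hu e).2, he, sub_self, sub_zero]

lemma isSelfAdjoint_unity [StarRing R] : IsSelfAdjoint u := by
  have h := congrArg star (hu (star u)).2
  rwa [star_mul, star_star, (hu (star u)).2] at h

lemma commute_unity_sub {e : R} (he : ∀ r : R, e * r = r * e) (r : R) :
    (u - e) * r = r * (u - e) := by
  rw [sub_mul, mul_sub, (hu r).1, (hu r).2, he]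

lemma forall_mul_mul_eq_zero_iff_exists_eq_unity_sub_mul {f : R} (hf : IsIdempotentElem f)
    (hf_central : ∀ r : R, f * r = r * f) (y : R) :
    (∀ r : R, f * r * y = 0) ↔ ∃ t : R, y = (u - f) * t := by
  constructor
  · intro hy
    have hfy : f * y = 0 := by simpa only [hf.eq] using hy f
    exact ⟨y, by rw [sub_mul, (hu y).1, hfy, sub_zero]⟩
  · rintro ⟨t, rfl⟩ r
    rw [hf_central, mul_assoc, ← mul_assoc f, mul_sub, (hu f).2, hf.eq, sub_self, zero_mul,
      mul_zero]

end Unity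

section StarRing

variable {R : Type*} [NonUnitalRing R] [StarRing R]

lemma commute_of_forall_mul_mul_self_eq {e : R} (he : IsSelfAdjoint e)
    (h : ∀ r : R, e * r * e = r * e) (r : R) : e * r = r * e := by
  have her : e * r * e = e * r := by
    have := congrArg star (h (star r))
    rwa [star_mul, star_mul, star_mul, star_star, he.star_eq, ← mul_assoc] at this
  rw [← her, h]

lemma commute_of_forall_mul_mul_eq_zero_iff {x e : R} (he : IsIdempotentElem e)
    (he_sa : IsSelfAdjoint e) (hx : ∀ y : R, (∀ r : R, x * r * y = 0) ↔ ∃ t : R, y = e * t)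
    (r : R) : e * r = r * e := by
  have hxe : ∀ s : R, x * s * e = 0 := (hx e).mpr ⟨e, he.eq.symm⟩
  refine commute_of_forall_mul_mul_self_eq he_sa (fun r => ?_) r
  obtain ⟨t, ht⟩ := (hx (r * e)).mp fun s => by rw [← mul_assoc, mul_assoc x s r, hxe]
  rw [mul_assoc, ht, ← mul_assoc, he.eq]

lemma exists_unity_of_forall_mul_eq_zero_iff {e : R} (he : IsIdempotentElem e)
    (he_sa : IsSelfAdjoint e) (hx : ∀ y : R, (∀ r : R, (0 : R) * r * y = 0) ↔ ∃ t : R, y = e * t) :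
    ∀ y : R, e * y = y ∧ y * e = y := by
  have hleft (y : R) : e * y = y := by
    obtain ⟨t, rfl⟩ := (hx y).mp fun r => by rw [zero_mul, zero_mul]
    rw [← mul_assoc, he.eq]
  refine fun y => ⟨hleft y, ?_⟩
  have := congrArg star (hleft (star y))
  rwa [star_mul, star_star, he_sa.star_eq] at this

end StarRing

/-- A *-ring `R` is a p.q.-Baer *-ring iff `R` has a unity element and for each `x`
there is a central projection `e` with `r_R(xR) = r_R(eR)`. -/
theorem pqBaer_iff_unity_and_central (R : Type*) [NonUnitalRing R] [StarRing R] :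
    (∀ x : R, ∃ e : R, (e * e = e ∧ star e = e) ∧
      ∀ y : R, (∀ r : R, x * r * y = 0) ↔ ∃ t : R, y = e * t)
    ↔ ((∃ u : R, ∀ x : R, u * x = x ∧ x * u = x) ∧
      ∀ x : R, ∃ e : R, (e * e = e ∧ star e = e) ∧ (∀ r : R, e * r = r * e) ∧
        ∀ y : R, (∀ r : R, x * r * y = 0) ↔ (∀ r : R, e * r * y = 0)) := by
  constructor
  · intro h
    obtain ⟨u, ⟨hu_idem, hu_sa⟩, hu_ann⟩ := h 0
    have hu := exists_unity_of_forall_mul_eq_zero_iff hu_idem hu_sa hu_ann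
    refine ⟨⟨u, hu⟩, fun x => ?_⟩
    obtain ⟨e, ⟨he, he_sa⟩, hx⟩ := h x
    have he_central := commute_of_forall_mul_mul_eq_zero_iff he he_sa hx
    refine ⟨u - e, ⟨isIdempotentElem_unity_sub hu he,
      (isSelfAdjoint_unity hu).sub he_sa⟩, commute_unity_sub hu he_central, fun y => ?_⟩
    rw [hx, forall_mul_mul_eq_zero_iff_exists_eq_unity_sub_mul hu
      (isIdempotentElem_unity_sub hu he) (commute_unity_sub hu he_central), sub_sub_cancel]
  · rintro ⟨⟨u, hu⟩, h⟩ x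
    obtain ⟨e, ⟨he, he_sa⟩, he_central, hx⟩ := h x
    refine ⟨u - e, ⟨isIdempotentElem_unity_sub hu he, (isSelfAdjoint_unity hu).sub he_sa⟩,
      fun y => ?_⟩
    rw [hx, forall_mul_mul_eq_zero_iff_exists_eq_unity_sub_mul hu he he_central]
end

section
/- A *-ring R is a weakly p.q.-Baer *-ring if and only if R has a semi-proper involution and for each x ∈ R there exists a central projection e with r_R(xR) = r_R(eR). -/
/-!
For a central idempotent `e` we have `r(eR) = r(e)`, so the annihilator condition of the two
sides is the same statement. The remaining content is that `e` can be chosen with `x e = x`.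
For `a = x - x e` one has `e a* = 0`, hence `x R a* = 0` and then `a R a* = 0`; this is where
semi-properness is needed, and it gives `x e = x`. Conversely, if `a R a* = 0` and `e` is the
projection attached to `a`, then `e a* = 0` and `a = a e = (e a*)* = 0`. Minimality of `e` is
automatic: if `f` is central with `x f = x`, then `x R (e - e f) = 0`, so `e = e f`.
-/

def IsSemiproperInvolution (R : Type*) [Mul R] [Zero R] [Star R] : Prop :=
  ∀ a : R, (∀ r : R, a * r * star a = 0) → a = 0

section SemigroupWithZero

variable {R : Type*} [SemigroupWithZero R] {e : R}

theorem forall_mul_mul_eq_zero_iff_of_central_idempotent (he : IsIdempotentElem e)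
    (hc : ∀ r : R, e * r = r * e) (y : R) : (∀ r : R, e * r * y = 0) ↔ e * y = 0 := by
  refine ⟨fun h => ?_, fun h r => ?_⟩
  · simpa only [he.eq] using h e
  · rw [hc, mul_assoc, h, mul_zero]

theorem mul_mul_eq_of_mul_eq_of_central {x : R} (hc : ∀ r : R, e * r = r * e) (hxe : x * e = x)
    (r : R) : x * r * e = x * r := by
  rw [mul_assoc, ← hc, ← mul_assoc, hxe]

end SemigroupWithZero

theorem mul_eq_left_of_central_of_annihilator {R : Type*} [NonUnitalRing R] {x e f : R}
    (he : IsIdempotentElem e) (hce : ∀ r : R, e * r = r * e) (hcf : ∀ r : R, f * r = r * f)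
    (hann : ∀ y : R, (∀ r : R, x * r * y = 0) → e * y = 0) (hxe : x * e = x)
    (hxf : x * f = x) : e * f = e := by
  have h : e * (e - e * f) = 0 := hann _ fun r => by
    rw [mul_sub, ← mul_assoc, mul_mul_eq_of_mul_eq_of_central hce hxe,
      mul_mul_eq_of_mul_eq_of_central hcf hxf, sub_self]
  rw [mul_sub, ← mul_assoc, he.eq, sub_eq_zero] at h
  exact h.symm

theorem eq_zero_of_mul_eq_self_of_mul_star_eq_zero {R : Type*} [NonUnitalNonAssocSemiring R]
    [StarRing R] {a e : R} (hse : IsSelfAdjoint e) (hae : a * e = a) (h : e * star a = 0) :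
    a = 0 := by
  rw [← hae, ← star_star a, ← hse.star_eq, ← star_mul, h, star_zero]

theorem mul_eq_self_of_isSemiproperInvolution {R : Type*} [NonUnitalRing R] [StarRing R]
    (hsp : IsSemiproperInvolution R) {x e : R} (he : IsIdempotentElem e) (hse : IsSelfAdjoint e)
    (hc : ∀ r : R, e * r = r * e) (hann : ∀ y : R, e * y = 0 → ∀ r : R, x * r * y = 0) :
    x * e = x := by
  have hea : e * star (x - x * e) = 0 := by
    rw [star_sub, star_mul, hse.star_eq, mul_sub, ← mul_assoc, he.eq, sub_self]
  have h := hsp (x - x * e) fun r => by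
    rw [sub_mul, sub_mul, mul_assoc x e r, hc r, ← mul_assoc x r e, mul_assoc (x * r) e, hea,
      mul_zero, hann _ hea, sub_zero]
  exact (sub_eq_zero.mp h).symm

/-- A *-ring `R` is weakly p.q.-Baer iff its involution is semi-proper and for each
`x` there exists a central projection `e` with `r_R(xR) = r_R(eR)`. -/
theorem weakly_pqBaer_iff_semiproper (R : Type*) [NonUnitalRing R] [StarRing R] :
    (∀ x : R, ∃ e : R, (e * e = e ∧ star e = e) ∧ (∀ r : R, e * r = r * e) ∧
      x * e = x ∧
      (∀ f : R, (f * f = f ∧ star f = f) → (∀ r : R, f * r = r * f) → x * f = x →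
        e * f = e) ∧
      (∀ y : R, (∀ r : R, x * r * y = 0) ↔ e * y = 0))
    ↔ ((∀ a : R, (∀ r : R, a * r * star a = 0) → a = 0) ∧
      ∀ x : R, ∃ e : R, (e * e = e ∧ star e = e) ∧ (∀ r : R, e * r = r * e) ∧
        ∀ y : R, (∀ r : R, x * r * y = 0) ↔ (∀ r : R, e * r * y = 0)) := by
  constructor
  · intro h
    refine ⟨fun a ha => ?_, fun x => ?_⟩
    · obtain ⟨e, ⟨-, hse⟩, -, hae, -, hann⟩ := h a
      exact eq_zero_of_mul_eq_self_of_mul_star_eq_zero hse hae ((hann _).1 ha)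
    · obtain ⟨e, ⟨he, hse⟩, hc, -, -, hann⟩ := h x
      exact ⟨e, ⟨he, hse⟩, hc, fun y =>
        (hann y).trans (forall_mul_mul_eq_zero_iff_of_central_idempotent he hc y).symm⟩
  · rintro ⟨hsp, h⟩ x
    obtain ⟨e, ⟨he, hse⟩, hc, hann⟩ := h x
    have hann' : ∀ y : R, (∀ r : R, x * r * y = 0) ↔ e * y = 0 := fun y =>
      (hann y).trans (forall_mul_mul_eq_zero_iff_of_central_idempotent he hc y)
    have hxe : x * e = x :=
      mul_eq_self_of_isSemiproperInvolution hsp he hse hc fun y => (hann' y).2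
    exact ⟨e, ⟨he, hse⟩, hc, hxe,
      fun f _ hcf hxf =>
        mul_eq_left_of_central_of_annihilator he hc hcf (fun y => (hann' y).1) hxe hxf,
      hann'⟩
end

section
/- In a weakly p.q.-Baer *-ring R, for x, y ∈ R: xRy = 0 if and only if C(x)C(y) = 0, where C(x), C(y) denote central covers. -/
section CentralAnnihilator

variable {R : Type*} [NonUnitalRing R] {e f y : R}

theorem central_mul_eq_zero_of_mul_eq_self (hec : ∀ r : R, e * r = r * e) (hyf : y * f = y)
    (hef : e * f = 0) : e * y = 0 :=
  calc e * y = e * (y * f) := by rw [hyf]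
    _ = y * (e * f) := by rw [← mul_assoc, hec, mul_assoc]
    _ = 0 := by rw [hef, mul_zero]

theorem mul_mul_central_eq_zero (hec : ∀ r : R, e * r = r * e) (hey : e * y = 0) (r : R) :
    y * r * e = 0 := by
  rw [← hec, ← mul_assoc, hey, zero_mul]

end CentralAnnihilator

theorem weakly_pqBaer_xRy_iff_covers_general (R : Type*) [NonUnitalRing R] [StarRing R]
    (x y e f : R)
    (he : (e * e = e ∧ star e = e) ∧ (∀ r : R, e * r = r * e) ∧ x * e = x ∧
      (∀ g : R, (g * g = g ∧ star g = g) → (∀ r : R, g * r = r * g) → x * g = x →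
        e * g = e) ∧
      (∀ z : R, (∀ r : R, x * r * z = 0) ↔ e * z = 0))
    (hf : (f * f = f ∧ star f = f) ∧ (∀ r : R, f * r = r * f) ∧ y * f = y ∧
      (∀ g : R, (g * g = g ∧ star g = g) → (∀ r : R, g * r = r * g) → y * g = y →
        f * g = f) ∧
      (∀ z : R, (∀ r : R, y * r * z = 0) ↔ f * z = 0)) :
    (∀ r : R, x * r * y = 0) ↔ e * f = 0 := by
  obtain ⟨-, hec, -, -, heann⟩ := he
  obtain ⟨-, -, hyf, -, hfann⟩ := hf
  rw [heann]
  refine ⟨fun hey => ?_, central_mul_eq_zero_of_mul_eq_self hec hyf⟩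
  have hfe : f * e = 0 := (hfann e).mp (mul_mul_central_eq_zero hec hey)
  rw [hec, hfe]

/-- In a weakly p.q.-Baer *-ring, `xRy = 0` iff `C(x) * C(y) = 0`. -/
theorem weakly_pqBaer_xRy_iff_covers (R : Type*) [NonUnitalRing R] [StarRing R]
    (hw : ∀ x : R, ∃ e : R, (e * e = e ∧ star e = e) ∧ (∀ r : R, e * r = r * e) ∧
      x * e = x ∧
      (∀ f : R, (f * f = f ∧ star f = f) → (∀ r : R, f * r = r * f) → x * f = x →
        e * f = e) ∧
      (∀ y : R, (∀ r : R, x * r * y = 0) ↔ e * y = 0))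
    (x y e f : R)
    (he : (e * e = e ∧ star e = e) ∧ (∀ r : R, e * r = r * e) ∧ x * e = x ∧
      (∀ g : R, (g * g = g ∧ star g = g) → (∀ r : R, g * r = r * g) → x * g = x →
        e * g = e) ∧
      (∀ z : R, (∀ r : R, x * r * z = 0) ↔ e * z = 0))
    (hf : (f * f = f ∧ star f = f) ∧ (∀ r : R, f * r = r * f) ∧ y * f = y ∧
      (∀ g : R, (g * g = g ∧ star g = g) → (∀ r : R, g * r = r * g) → y * g = y →
        f * g = f) ∧
      (∀ z : R, (∀ r : R, y * r * z = 0) ↔ f * z = 0)) :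
    (∀ r : R, x * r * y = 0) ↔ e * f = 0 :=
  weakly_pqBaer_xRy_iff_covers_general R x y e f he hf
end

section
/- Let R be a *-ring with semi-proper involution, K a commutative *-ring that is an integral domain, and R a *-algebra over K. Then the unitification R₁ = R ⊕ K, with multiplication (a,λ)(b,μ) = (ab + μa + λb, λμ) and involution (a,λ)* = (a*, λ*), also has a semi-proper involution. -/
namespace Unitization

variable {K R : Type*} [CommRing K] [StarRing K] [NonUnitalRing R] [StarRing R] [Module K R]

theorem fst_eq_zero_of_mul_star_eq_zero [NoZeroDivisors K] {s : Unitization K R}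
    (h : s * star s = 0) : s.fst = 0 := by
  have hfst : s.fst * star s.fst = 0 := by simpa using congrArg (·.fst) h
  exact (mul_eq_zero.mp hfst).elim id star_eq_zero.mp

theorem inr_mul_mul_star_inr [StarModule K R] (a r : R) :
    (a : Unitization K R) * r * star (a : Unitization K R) = ↑(a * r * star a) := by
  rw [← inr_star, ← inr_mul, ← inr_mul]

/-- In a domain `x x* = 0` forces `x = 0`, so testing against `r = 1` puts
`s` in `R`, where testing against `r ∈ R` is the hypothesis on `R`. -/
theorem eq_zero_of_forall_mul_mul_star_eq_zero [NoZeroDivisors K] [IsScalarTower K R R]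
    [SMulCommClass K R R] [StarModule K R]
    (hR : ∀ a : R, (∀ r : R, a * r * star a = 0) → a = 0) {s : Unitization K R}
    (hs : ∀ r : Unitization K R, s * r * star s = 0) : s = 0 := by
  have hfst : s.fst = 0 := fst_eq_zero_of_mul_star_eq_zero (by simpa using hs 1)
  obtain ⟨a, rfl⟩ : ∃ a : R, s = a := ⟨s.snd, by ext <;> simp [hfst]⟩
  have ha : a = 0 :=
    hR a fun r ↦ inr_injective (R := K) (by rw [← inr_mul_mul_star_inr, hs, inr_zero])
  rw [ha, inr_zero]

end Unitization

/-- If `R` is a *-ring with semi-proper involution and `K` an integral domain with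
involution over which `R` is a *-algebra, then the unitification `R₁ = R ⊕ K` also
has a semi-proper involution. -/
theorem unitization_semiproper (R K : Type*) [NonUnitalRing R] [StarRing R]
    [CommRing K] [IsDomain K] [StarRing K]
    [Module K R] [IsScalarTower K R R] [SMulCommClass K R R] [StarModule K R]
    (hR : ∀ a : R, (∀ r : R, a * r * star a = 0) → a = 0) :
    ∀ s : Unitization K R, (∀ r : Unitization K R, s * r * star s = 0) → s = 0 :=
  fun _ hs ↦ Unitization.eq_zero_of_forall_mul_mul_star_eq_zero hR hs
end
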